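/- Let V be a finite-dimensional real inner product space, b ∈ V with ‖b‖ = 1, g, k ∈ ℝ with |g| < 2, h = √(1 − g²/4), and let q, v, A, B, λ be as in the Finsleroid setting. Define the Landsberg spray endomorphism G_y : V → V for q(y) > 0 by G_y(w) = (g·k/q(y))·[⟨v(y),w⟩·v(y) + q(y)²·(w − ⟨b,w⟩·b)]. Then for y₁, y₂ with q(y₁) > 0 and q(y₂) > 0, and every w ∈ V, the derivative of y ↦ λ(y, y₂) at y₁ applied to G_{y₁}(w) equals (g·k/q₁)·[ ((g/2)q₁A₂⟨v(y₁),w⟩ + h²q₁²⟨v(y₂),w⟩)/√(B₁B₂) − q₁λ(q₁ + (g/2)b₁)⟨v(y₁),w⟩/B₁ + λA₁b₁⟨v(y₁),w⟩/B₁ − A₂b₁⟨v(y₁),w⟩/√(B₁B₂) ], where qₐ = q(yₐ), bₐ = ⟨b,yₐ⟩, Aₐ = A(yₐ), Bₐ = B(yₐ), λ = λ(y₁,y₂). -/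

import Mathlib

/-!
The spray direction `u = G_{y₁}(w)` is orthogonal to `b`, so along it `⟨b, y⟩` is stationary and
`λ(·, y₂)` varies only through `q`, with `dq(u) = ⟨v(y₁), u⟩ / q(y₁) = 2gk⟨v(y₁), w⟩`, and through
`⟨y, y₂⟩`, with `⟨y₂, u⟩ = (gk/q₁)(⟨v(y₁), w⟩⟨v(y₁), v(y₂)⟩ + q₁²⟨v(y₂), w⟩)`. The quotient rule
then gives the derivative, and eliminating `h²⟨v(y₁), v(y₂)⟩ = λ √(B₁B₂) − A₁A₂` puts it in the
stated form.
-/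

open scoped InnerProductSpace

theorem HasFDerivAt.div {𝕜 E : Type*} [NontriviallyNormedField 𝕜] [NormedAddCommGroup E]
    [NormedSpace 𝕜 E] {c d : E → 𝕜} {c' d' : E →L[𝕜] 𝕜} {x : E}
    (hc : HasFDerivAt c c' x) (hd : HasFDerivAt d d' x) (hx : d x ≠ 0) :
    HasFDerivAt (fun y => c y / d y) ((d x)⁻¹ • c' - (c x / d x ^ 2) • d') x := by
  simp_rw [div_eq_mul_inv]
  refine (hc.mul ((hasDerivAt_inv hx).comp_hasFDerivAt x hd)).congr_fderiv ?_
  ext u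
  simp only [add_apply, sub_apply, smul_apply, smul_eq_mul, Function.comp_apply]
  ring

namespace Finsleroid

noncomputable section

variable {V : Type*} [NormedAddCommGroup V] [InnerProductSpace ℝ V] (b : V) (g h k : ℝ)

def proj (y : V) : V := y - ⟪b, y⟫_ℝ • b

def q (y : V) : ℝ := √(‖y‖ ^ 2 - ⟪b, y⟫_ℝ ^ 2)

def A (y : V) : ℝ := ⟪b, y⟫_ℝ + g / 2 * q b y

def B (y : V) : ℝ := ⟪b, y⟫_ℝ ^ 2 + g * ⟪b, y⟫_ℝ * q b y + q b y ^ 2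

def lam (y₁ y₂ : V) : ℝ :=
  (A b g y₁ * A b g y₂ + h ^ 2 * (⟪y₁, y₂⟫_ℝ - ⟪b, y₁⟫_ℝ * ⟪b, y₂⟫_ℝ)) / √(B b g y₁ * B b g y₂)

def spray (y w : V) : V :=
  (g * k / q b y) • (⟪proj b y, w⟫_ℝ • proj b y + q b y ^ 2 • (w - ⟪b, w⟫_ℝ • b))

end

variable {V : Type*} [NormedAddCommGroup V] [InnerProductSpace ℝ V] {b : V} {g : ℝ}

theorem proj_self (hb : ‖b‖ = 1) : proj b b = 0 := by
  simp [proj, hb]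

theorem inner_proj_proj (hb : ‖b‖ = 1) (y z : V) :
    ⟪proj b y, proj b z⟫_ℝ = ⟪y, z⟫_ℝ - ⟪b, y⟫_ℝ * ⟪b, z⟫_ℝ := by
  simp only [proj, inner_sub_left, inner_sub_right, real_inner_smul_left, real_inner_smul_right,
    real_inner_self_eq_norm_sq, hb, real_inner_comm y b]
  ring

theorem q_eq_norm_proj (hb : ‖b‖ = 1) (y : V) : q b y = ‖proj b y‖ := by
  have h : ‖y‖ ^ 2 - ⟪b, y⟫_ℝ ^ 2 = ‖proj b y‖ ^ 2 := by
    rw [← real_inner_self_eq_norm_sq (proj b y), inner_proj_proj hb, real_inner_self_eq_norm_sq]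
    ring
  rw [q, h, Real.sqrt_sq (norm_nonneg _)]

-- `B = (⟨b, y⟩ + g q / 2)² + (1 - g² / 4) q²`.
theorem B_pos (hg : |g| < 2) {y : V} (hy : 0 < q b y) : 0 < B b g y := by
  have hg' : 0 < 1 - g ^ 2 / 4 := by nlinarith [abs_lt.mp hg]
  rw [B]
  nlinarith [sq_nonneg (⟪b, y⟫_ℝ + g / 2 * q b y), mul_pos hg' (mul_pos hy hy)]

theorem hasFDerivAt_q {y : V} (hy : 0 < q b y) :
    HasFDerivAt (q b) ((q b y)⁻¹ • innerSL ℝ (proj b y)) y := by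
  have hs : HasFDerivAt (fun y : V => ‖y‖ ^ 2 - ⟪b, y⟫_ℝ ^ 2)
      (2 • innerSL ℝ y - (2 * ⟪b, y⟫_ℝ) • innerSL ℝ b) y := by
    refine ((hasStrictFDerivAt_norm_sq y).hasFDerivAt.sub
      ((innerSL ℝ b).hasFDerivAt.pow 2)).congr_fderiv ?_
    ext u
    simp
  refine (hs.sqrt (Real.sqrt_pos.mp hy).ne').congr_fderiv ?_
  ext u
  simp only [smul_apply, sub_apply, innerSL_apply_apply, proj, inner_sub_left,
    real_inner_smul_left, smul_eq_mul]
  rw [← q]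
  field_simp
  ring

theorem inner_spray (hb : ‖b‖ = 1) (k : ℝ) (y w z : V) :
    ⟪z, spray b g k y w⟫_ℝ = g * k / q b y
      * (⟪proj b y, w⟫_ℝ * ⟪proj b z, proj b y⟫_ℝ + q b y ^ 2 * ⟪proj b z, w⟫_ℝ) := by
  simp only [spray, proj, inner_smul_right, inner_add_right, inner_sub_right, inner_sub_left,
    real_inner_smul_left, real_inner_self_eq_norm_sq, hb, real_inner_comm b z]
  ring

theorem fderiv_lam_apply (h : ℝ) {y₁ y₂ u : V} (hy₁ : 0 < q b y₁) (hB : 0 < B b g y₁ * B b g y₂)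
    (hu : ⟪b, u⟫_ℝ = 0) :
    fderiv ℝ (fun y => lam b g h y y₂) y₁ u
      = (g / 2 * A b g y₂ * (⟪y₁, u⟫_ℝ / q b y₁) + h ^ 2 * ⟪y₂, u⟫_ℝ) / √(B b g y₁ * B b g y₂)
        - lam b g h y₁ y₂ * (g * ⟪b, y₁⟫_ℝ + 2 * q b y₁) * (⟪y₁, u⟫_ℝ / q b y₁)
          / (2 * B b g y₁) := by
  have hβ : HasFDerivAt (fun y : V => ⟪b, y⟫_ℝ) (innerSL ℝ b) y₁ := (innerSL ℝ b).hasFDerivAt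
  have hq := hasFDerivAt_q hy₁
  have hA : HasFDerivAt (A b g) _ y₁ := hβ.add (hq.const_mul (g / 2))
  have hB₁ : HasFDerivAt (B b g) _ y₁ :=
    ((hβ.pow 2).add ((hβ.const_mul g).mul hq)).add (hq.pow 2)
  have hJ : HasFDerivAt (fun y : V => ⟪y, y₂⟫_ℝ) (innerSL ℝ y₂) y₁ := by
    convert (innerSL ℝ y₂).hasFDerivAt using 2 with y
    exact real_inner_comm y₂ y
  have hN : HasFDerivAt
      (fun y => A b g y * A b g y₂ + h ^ 2 * (⟪y, y₂⟫_ℝ - ⟪b, y⟫_ℝ * ⟪b, y₂⟫_ℝ)) _ y₁ :=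
    (hA.mul_const (A b g y₂)).add ((hJ.sub (hβ.mul_const ⟪b, y₂⟫_ℝ)).const_mul (h ^ 2))
  have hS := (hB₁.mul_const (B b g y₂)).sqrt hB.ne'
  have hr : √(B b g y₁ * B b g y₂) ^ 2 = B b g y₁ * B b g y₂ := Real.sq_sqrt hB.le
  change fderiv ℝ (fun y => _ / _) y₁ u = _
  rw [(hN.div hS (Real.sqrt_pos.mpr hB).ne').fderiv]
  simp only [sub_apply, add_apply, smul_apply, innerSL_apply_apply, smul_eq_mul, nsmul_eq_mul,
    proj, inner_sub_left, real_inner_smul_left, hu]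
  rw [hr, lam]
  have hB₁0 : B b g y₁ ≠ 0 := left_ne_zero_of_mul hB.ne'
  have hB₂0 : B b g y₂ ≠ 0 := right_ne_zero_of_mul hB.ne'
  have hq0 : q b y₁ ≠ 0 := hy₁.ne'
  have hS0 : √(B b g y₁ * B b g y₂) ≠ 0 := (Real.sqrt_pos.mpr hB).ne'
  field_simp
  ring

theorem fderiv_lam_spray (hb : ‖b‖ = 1) (hg : |g| < 2) (h k : ℝ) {y₁ y₂ : V}
    (hy₁ : 0 < q b y₁) (hy₂ : 0 < q b y₂) (w : V) :
    fderiv ℝ (fun y => lam b g h y y₂) y₁ (spray b g k y₁ w)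
      = (g * k / q b y₁)
          * ((g / 2 * q b y₁ * A b g y₂ * ⟪proj b y₁, w⟫_ℝ + h ^ 2 * q b y₁ ^ 2 * ⟪proj b y₂, w⟫_ℝ)
                / √(B b g y₁ * B b g y₂)
              - q b y₁ * lam b g h y₁ y₂ * (q b y₁ + g / 2 * ⟪b, y₁⟫_ℝ) * ⟪proj b y₁, w⟫_ℝ
                / B b g y₁
              + lam b g h y₁ y₂ * A b g y₁ * ⟪b, y₁⟫_ℝ * ⟪proj b y₁, w⟫_ℝ / B b g y₁
              - A b g y₂ * ⟪b, y₁⟫_ℝ * ⟪proj b y₁, w⟫_ℝ / √(B b g y₁ * B b g y₂)) := by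
  have hB := mul_pos (B_pos hg hy₁) (B_pos hg hy₂)
  have hS0 : √(B b g y₁ * B b g y₂) ≠ 0 := (Real.sqrt_pos.mpr hB).ne'
  have hu : ⟪b, spray b g k y₁ w⟫_ℝ = 0 := by
    rw [inner_spray hb, proj_self hb]
    simp
  have hlam : lam b g h y₁ y₂ * √(B b g y₁ * B b g y₂)
      = A b g y₁ * A b g y₂ + h ^ 2 * ⟪proj b y₁, proj b y₂⟫_ℝ := by
    rw [inner_proj_proj hb, lam, div_mul_cancel₀ _ hS0]
  have hq₁ : ⟪proj b y₁, proj b y₁⟫_ℝ = q b y₁ ^ 2 := by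
    rw [q_eq_norm_proj hb, real_inner_self_eq_norm_sq]
  rw [fderiv_lam_apply h hy₁ hB hu, inner_spray hb, inner_spray hb, hq₁,
    real_inner_comm (proj b y₁)]
  have hB₁0 : B b g y₁ ≠ 0 := left_ne_zero_of_mul hB.ne'
  have hq0 : q b y₁ ≠ 0 := hy₁.ne'
  field_simp
  simp only [A, B] at hlam ⊢
  linear_combination
    -2 * g * k * ⟪proj b y₁, w⟫_ℝ * (⟪b, y₁⟫_ℝ ^ 2 + g * ⟪b, y₁⟫_ℝ * q b y₁ + q b y₁ ^ 2) * hlam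

end Finsleroid

theorem finsleroid_lambda_contracted_with_spray_general
    {V : Type*} [NormedAddCommGroup V] [InnerProductSpace ℝ V]
    (b : V) (hb : ‖b‖ = 1) (g k h : ℝ) (hg : |g| < 2)
    (q A B : V → ℝ) (v : V → V) (lam : V → V → ℝ) (G : V → V → V)
    (hq : ∀ y : V, q y = Real.sqrt (‖y‖ ^ 2 - ⟪b, y⟫_ℝ ^ 2))
    (hv : ∀ y : V, v y = y - ⟪b, y⟫_ℝ • b)
    (hA : ∀ y : V, A y = ⟪b, y⟫_ℝ + (g / 2) * q y)
    (hB : ∀ y : V, B y = ⟪b, y⟫_ℝ ^ 2 + g * ⟪b, y⟫_ℝ * q y + q y ^ 2)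
    (hlam : ∀ y₁ y₂ : V, y₁ ≠ 0 → y₂ ≠ 0 →
      lam y₁ y₂ = (A y₁ * A y₂ + h ^ 2 * (⟪y₁, y₂⟫_ℝ - ⟪b, y₁⟫_ℝ * ⟪b, y₂⟫_ℝ))
        / Real.sqrt (B y₁ * B y₂))
    (hG : ∀ y w : V,
      G y w = (g * k / q y) • (⟪v y, w⟫_ℝ • v y + (q y ^ 2) • (w - ⟪b, w⟫_ℝ • b))) :
    ∀ y₁ y₂ : V, 0 < q y₁ → 0 < q y₂ → ∀ w : V,
      fderiv ℝ (fun y => lam y y₂) y₁ (G y₁ w)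
        = (g * k / q y₁)
            * (((g / 2) * q y₁ * A y₂ * ⟪v y₁, w⟫_ℝ + h ^ 2 * q y₁ ^ 2 * ⟪v y₂, w⟫_ℝ)
                  / Real.sqrt (B y₁ * B y₂)
                - q y₁ * lam y₁ y₂ * (q y₁ + (g / 2) * ⟪b, y₁⟫_ℝ) * ⟪v y₁, w⟫_ℝ / B y₁
                + lam y₁ y₂ * A y₁ * ⟪b, y₁⟫_ℝ * ⟪v y₁, w⟫_ℝ / B y₁
                - A y₂ * ⟪b, y₁⟫_ℝ * ⟪v y₁, w⟫_ℝ / Real.sqrt (B y₁ * B y₂)) := by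
  intro y₁ y₂ hy₁ hy₂ w
  obtain rfl : q = Finsleroid.q b := funext hq
  obtain rfl : v = Finsleroid.proj b := funext hv
  obtain rfl : A = Finsleroid.A b g := funext hA
  obtain rfl : B = Finsleroid.B b g := funext hB
  obtain rfl : G = Finsleroid.spray b g k := funext fun y => funext (hG y)
  have ne_zero_of_q_pos : ∀ {y}, 0 < Finsleroid.q b y → y ≠ 0 := by
    rintro y hy rfl
    simp [Finsleroid.q] at hy
  have hlam_eq : (fun y => lam y y₂) =ᶠ[nhds y₁] fun y => Finsleroid.lam b g h y y₂ :=
    (eventually_ne_nhds (ne_zero_of_q_pos hy₁)).mono fun y hy =>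
      hlam y y₂ hy (ne_zero_of_q_pos hy₂)
  rw [hlam_eq.fderiv_eq, hlam y₁ y₂ (ne_zero_of_q_pos hy₁) (ne_zero_of_q_pos hy₂)]
  exact Finsleroid.fderiv_lam_spray hb hg h k hy₁ hy₂ w

/-- In the Finsleroid setting with the Landsberg spray endomorphism
`G_y(w) = (g·k/q(y))·[⟨v(y),w⟩·v(y) + q(y)²·(w − ⟨b,w⟩·b)]`, the derivative of
`y ↦ λ(y, y₂)` at `y₁`, applied to `G_{y₁}(w)`, equals the stated explicit expression
(formula (A.17) of the paper). -/
theorem finsleroid_lambda_contracted_with_spray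
    {V : Type*} [NormedAddCommGroup V] [InnerProductSpace ℝ V] [FiniteDimensional ℝ V]
    (b : V) (hb : ‖b‖ = 1) (g k h : ℝ) (hg : |g| < 2)
    (hh : h = Real.sqrt (1 - g ^ 2 / 4))
    (q A B : V → ℝ) (v : V → V) (lam : V → V → ℝ) (G : V → V → V)
    (hq : ∀ y : V, q y = Real.sqrt (‖y‖ ^ 2 - ⟪b, y⟫_ℝ ^ 2))
    (hv : ∀ y : V, v y = y - ⟪b, y⟫_ℝ • b)
    (hA : ∀ y : V, A y = ⟪b, y⟫_ℝ + (g / 2) * q y)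
    (hB : ∀ y : V, B y = ⟪b, y⟫_ℝ ^ 2 + g * ⟪b, y⟫_ℝ * q y + q y ^ 2)
    (hlam : ∀ y₁ y₂ : V, y₁ ≠ 0 → y₂ ≠ 0 →
      lam y₁ y₂ = (A y₁ * A y₂ + h ^ 2 * (⟪y₁, y₂⟫_ℝ - ⟪b, y₁⟫_ℝ * ⟪b, y₂⟫_ℝ))
        / Real.sqrt (B y₁ * B y₂))
    (hG : ∀ y w : V,
      G y w = (g * k / q y) • (⟪v y, w⟫_ℝ • v y + (q y ^ 2) • (w - ⟪b, w⟫_ℝ • b))) :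
    ∀ y₁ y₂ : V, 0 < q y₁ → 0 < q y₂ → ∀ w : V,
      fderiv ℝ (fun y => lam y y₂) y₁ (G y₁ w)
        = (g * k / q y₁)
            * (((g / 2) * q y₁ * A y₂ * ⟪v y₁, w⟫_ℝ + h ^ 2 * q y₁ ^ 2 * ⟪v y₂, w⟫_ℝ)
                  / Real.sqrt (B y₁ * B y₂)
                - q y₁ * lam y₁ y₂ * (q y₁ + (g / 2) * ⟪b, y₁⟫_ℝ) * ⟪v y₁, w⟫_ℝ / B y₁
                + lam y₁ y₂ * A y₁ * ⟪b, y₁⟫_ℝ * ⟪v y₁, w⟫_ℝ / B y₁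
                - A y₂ * ⟪b, y₁⟫_ℝ * ⟪v y₁, w⟫_ℝ / Real.sqrt (B y₁ * B y₂)) :=
  finsleroid_lambda_contracted_with_spray_general b hb g k h hg q A B v lam G hq hv hA hB hlam hG
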